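/- arXiv:1202.6447 — 4 statements merged into one kernel-verified Lean document; each statement's English description precedes it below -/
import Mathlib

section
/- For all q ≥ 2, n ≥ 1, d, and composition w̄ = [w₁,…,w_{q−1}] with w₁ ≥ 1, the Johnson-type bound holds: A_q(n,d,[w₁,…,w_{q−1}]) ≤ (n/w₁)·A_q(n−1,d,[w₁−1,w₂,…,w_{q−1}]). -/
open Finset

/-- `u` has composition `w̄`: for each nonzero symbol `j`, exactly `w j` coordinates equal `j`. -/
def HasComposition {q : ℕ} {X : Type*} [Fintype X] [DecidableEq X]
    (w : ZMod q → ℕ) (u : X → ZMod q) : Prop :=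
  ∀ j : ZMod q, j ≠ 0 → (Finset.univ.filter fun x => u x = j).card = w j

/-- A constant-composition code with composition `w̄` and minimum distance `d`. -/
def IsCCCode (q d : ℕ) (w : ZMod q → ℕ) {X : Type*} [Fintype X] [DecidableEq X]
    (C : Finset (X → ZMod q)) : Prop :=
  (∀ u ∈ C, HasComposition w u) ∧
  ∀ u ∈ C, ∀ v ∈ C, u ≠ v → d ≤ hammingDist u v

/-- `A_q(n,d,w̄)`: the maximum size of an `(n,d,w̄)_q` constant-composition code. -/
noncomputable def maxCCC (q n d : ℕ) (w : ZMod q → ℕ) : ℕ :=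
  sSup {s | ∃ C : Finset (Fin n → ZMod q), IsCCCode q d w C ∧ C.card = s}

/-- The composition `[2,1,1]` for quaternary codes: two 1's, one 2, one 3. -/
def w211 : ZMod 4 → ℕ :=
  fun j => if j = 1 then 2 else if j = 2 then 1 else if j = 3 then 1 else 0

lemma count_succAbove {m : ℕ} (x : Fin (m + 1)) (p : Fin (m + 1) → Prop) [DecidablePred p] :
    (Finset.univ.filter p).card
      = (Finset.univ.filter fun i => p (x.succAbove i)).card + (if p x then 1 else 0) := by
  have huniv : (Finset.univ : Finset (Fin (m + 1)))
      = (Finset.univ.image x.succAbove) ∪ {x} := by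
    ext y
    simp only [mem_univ, mem_union, mem_image, mem_singleton, true_iff]
    rcases eq_or_ne y x with h | h
    · exact Or.inr h
    · obtain ⟨z, hz⟩ := Fin.exists_succAbove_eq h
      exact Or.inl ⟨z, by simp [hz]⟩
  rw [huniv, filter_union, card_union_of_disjoint, Finset.filter_image,
    card_image_of_injective _ (Fin.succAbove_right_injective)]
  · rw [filter_singleton]
    by_cases hp : p x <;> simp [hp]
  · refine disjoint_left.2 fun y hy hy' => ?_
    simp only [mem_filter, mem_image, mem_singleton] at hy hy'
    obtain ⟨⟨z, _, hz⟩, _⟩ := hy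
    exact Fin.succAbove_ne x z (hz.trans hy'.1)

lemma maxCCC_bddAbove (q n d : ℕ) [NeZero q] (w : ZMod q → ℕ) :
    BddAbove {s | ∃ C : Finset (Fin n → ZMod q), IsCCCode q d w C ∧ C.card = s} := by
  refine ⟨Fintype.card (Fin n → ZMod q), fun s hs => ?_⟩
  obtain ⟨C, _, rfl⟩ := hs
  exact Finset.card_le_univ C

lemma card_le_maxCCC {q n d : ℕ} [NeZero q] {w : ZMod q → ℕ} {C : Finset (Fin n → ZMod q)}
    (hC : IsCCCode q d w C) : C.card ≤ maxCCC q n d w :=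
  le_csSup (maxCCC_bddAbove q n d w) ⟨C, hC, rfl⟩

lemma key_count (q d : ℕ) [NeZero q] (hq : 2 ≤ q) (m : ℕ) (w : ZMod q → ℕ)
    (C : Finset (Fin (m + 1) → ZMod q)) (hC : IsCCCode q d w C) :
    w 1 * C.card ≤ (m + 1) * maxCCC q m d (fun j => if j = (1 : ZMod q) then w 1 - 1 else w j) := by
  haveI : Fact (1 < q) := ⟨by omega⟩
  have h1ne0 : (1 : ZMod q) ≠ 0 := one_ne_zero
  have key : ∀ x : Fin (m + 1),
      (C.filter fun u => u x = 1).card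
        ≤ maxCCC q m d (fun j => if j = (1 : ZMod q) then w 1 - 1 else w j) := by
    intro x
    set res : (Fin (m + 1) → ZMod q) → (Fin m → ZMod q) :=
      fun u i => u (x.succAbove i) with hres
    set Cx := C.filter fun u => u x = 1 with hCx
    have hinj : Set.InjOn res Cx := by
      intro u hu v hv huv
      simp only [hCx, mem_coe, mem_filter] at hu hv
      funext y
      rcases eq_or_ne y x with rfl | h
      · rw [hu.2, hv.2]
      · obtain ⟨z, hz⟩ := Fin.exists_succAbove_eq h
        rw [← hz]
        exact congrFun huv z
    have hcard : (Cx.image res).card = Cx.card := Finset.card_image_of_injOn hinj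
    have hcode : IsCCCode q d (fun j => if j = (1 : ZMod q) then w 1 - 1 else w j)
        (Cx.image res) := by
      constructor
      · intro v hv j hj
        obtain ⟨u, hu, rfl⟩ := Finset.mem_image.1 hv
        simp only [hCx, mem_filter] at hu
        have hcomp := hC.1 u hu.1 j hj
        have hcnt := count_succAbove x (fun y => u y = j)
        rw [hcomp] at hcnt
        simp only [hres]
        by_cases hj1 : j = 1
        · subst hj1
          rw [if_pos hu.2] at hcnt
          simp only [if_true, eq_self_iff_true]
          omega
        · have hne : u x ≠ j := hu.2 ▸ fun h => hj1 h.symm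
          rw [if_neg hne, add_zero] at hcnt
          simp only [if_neg hj1]
          omega
      · intro v hv v' hv' hne
        obtain ⟨u, hu, rfl⟩ := Finset.mem_image.1 hv
        obtain ⟨u', hu', rfl⟩ := Finset.mem_image.1 hv'
        simp only [hCx, mem_filter] at hu hu'
        have huu' : u ≠ u' := fun h => hne (h ▸ rfl)
        refine (hC.2 u hu.1 u' hu'.1 huu').trans ?_
        have hcnt := count_succAbove x (fun y => u y ≠ u' y)
        have hx0 : ¬ (u x ≠ u' x) := by rw [hu.2, hu'.2]; exact not_ne_iff.2 rfl
        rw [if_neg hx0, add_zero] at hcnt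
        simp only [hammingDist, hres, ne_eq] at hcnt ⊢
        omega
    calc Cx.card = (Cx.image res).card := hcard.symm
      _ ≤ _ := card_le_maxCCC hcode
  have hdc : ∑ x : Fin (m + 1), (C.filter fun u => u x = 1).card = w 1 * C.card := by
    have h1 : ∀ x : Fin (m + 1), (C.filter fun u => u x = 1).card
        = ∑ u ∈ C, if u x = 1 then 1 else 0 := by
      intro x; rw [Finset.card_filter]
    simp_rw [h1]
    rw [Finset.sum_comm]
    have h2 : ∀ u ∈ C, ∑ x : Fin (m + 1), (if u x = 1 then 1 else 0) = w 1 := by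
      intro u hu
      rw [← Finset.card_filter]
      exact hC.1 u hu 1 h1ne0
    rw [Finset.sum_congr rfl h2, Finset.sum_const, smul_eq_mul, mul_comm]
  calc w 1 * C.card = ∑ x : Fin (m + 1), (C.filter fun u => u x = 1).card := hdc.symm
    _ ≤ ∑ _x : Fin (m + 1), maxCCC q m d (fun j => if j = (1 : ZMod q) then w 1 - 1 else w j) :=
        Finset.sum_le_sum fun x _ => key x
    _ = _ := by rw [Finset.sum_const, smul_eq_mul, Finset.card_univ, Fintype.card_fin]

/-- Johnson-type bound:
`A_q(n,d,[w₁,…,w_{q−1}]) ≤ (n/w₁)·A_q(n−1,d,[w₁−1,w₂,…,w_{q−1}])`. -/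
theorem maxCCC_johnson_bound (q n d : ℕ) [NeZero q] (hq : 2 ≤ q) (hn : 1 ≤ n)
    (w : ZMod q → ℕ) (hw1 : 1 ≤ w (1 : ZMod q)) :
    (maxCCC q n d w : ℚ) ≤
      ((n : ℚ) / (w (1 : ZMod q) : ℚ)) *
        (maxCCC q (n - 1) d (fun j => if j = (1 : ZMod q) then w 1 - 1 else w j) : ℚ) := by
  obtain ⟨m, rfl⟩ : ∃ m, n = m + 1 := ⟨n - 1, (Nat.succ_pred_eq_of_pos hn).symm⟩
  have hmem : maxCCC q (m + 1) d w ∈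
      {s | ∃ C : Finset (Fin (m + 1) → ZMod q), IsCCCode q d w C ∧ C.card = s} := by
    apply Nat.sSup_mem
    · exact ⟨0, ∅, ⟨fun u hu => absurd hu (notMem_empty u),
        fun u hu => absurd hu (notMem_empty u)⟩, card_empty⟩
    · exact maxCCC_bddAbove q (m + 1) d w
  obtain ⟨C, hC, hcard⟩ := hmem
  have hkey := key_count q d hq m w C hC
  rw [hcard] at hkey
  have hsimp : m + 1 - 1 = m := rfl
  rw [hsimp]
  have hw1' : (0 : ℚ) < (w (1 : ZMod q) : ℚ) := by exact_mod_cast hw1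
  rw [div_mul_eq_mul_div, le_div_iff₀ hw1']
  have hQ := (Nat.cast_le (α := ℚ)).2 hkey
  push_cast at hQ ⊢
  nlinarith [hQ]
end

section
/- For all n ≥ 4, A_4(n,5,[2,1,1]) ≤ n·⌊(n−1)/2⌋. -/
open Finset

/-! A codeword of composition `[2,1,1]` has weight 4, so two codewords at distance at least 5
agree in at most one nonzero coordinate. Hence the codewords whose `2` sits at a fixed
coordinate `x` have pairwise disjoint pairs of `1`-coordinates inside the other `n - 1`
coordinates, so there are at most `⌊(n-1)/2⌋` of them; summing over `x` gives the bound. -/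

section Hamming

variable {ι β : Type*} [Fintype ι] [DecidableEq ι] [Zero β] [DecidableEq β]

theorem hammingDist_add_two_mul_card_le_hammingNorm_add {u v : ι → β} {A : Finset ι}
    (hA : ∀ i ∈ A, u i = v i ∧ u i ≠ 0) :
    hammingDist u v + 2 * #A ≤ hammingNorm u + hammingNorm v := by
  set D : Finset ι := {i | u i ≠ v i}
  have hDu : Disjoint (D.filter (u · ≠ 0)) A :=
    disjoint_left.2 fun i hi hiA => (mem_filter.1 (mem_filter.1 hi).1).2 (hA i hiA).1
  have hDv : Disjoint (D.filter (v · ≠ 0)) A :=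
    disjoint_left.2 fun i hi hiA => (mem_filter.1 (mem_filter.1 hi).1).2 (hA i hiA).1
  have hcover : D ⊆ D.filter (u · ≠ 0) ∪ D.filter (v · ≠ 0) := by
    intro i hi
    by_cases hui : u i = 0
    · refine mem_union_right _ (mem_filter.2 ⟨hi, fun hvi => ?_⟩)
      exact (mem_filter.1 hi).2 (hui.trans hvi.symm)
    · exact mem_union_left _ (mem_filter.2 ⟨hi, hui⟩)
  have hsu : D.filter (u · ≠ 0) ∪ A ⊆ ({i | u i ≠ 0} : Finset ι) := by
    intro i
    simp only [mem_union, mem_filter, mem_univ, true_and]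
    rintro (⟨-, hi⟩ | hi)
    exacts [hi, (hA i hi).2]
  have hsv : D.filter (v · ≠ 0) ∪ A ⊆ ({i | v i ≠ 0} : Finset ι) := by
    intro i
    simp only [mem_union, mem_filter, mem_univ, true_and]
    rintro (⟨-, hi⟩ | hi)
    exacts [hi, (hA i hi).1 ▸ (hA i hi).2]
  have h1 := (card_le_card hcover).trans (card_union_le _ _)
  have h2 := card_union_of_disjoint hDu ▸ card_le_card hsu
  have h3 := card_union_of_disjoint hDv ▸ card_le_card hsv
  change #D + 2 * #A ≤ #({i | u i ≠ 0} : Finset ι) + #({i | v i ≠ 0} : Finset ι)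
  omega

end Hamming

section Composition

variable {ι : Type*} [Fintype ι] [DecidableEq ι]

theorem HasComposition.hammingNorm_eq {q : ℕ} [NeZero q] {w : ZMod q → ℕ} {u : ι → ZMod q}
    (h : HasComposition w u) : hammingNorm u = ∑ j ∈ univ.erase 0, w j := by
  rw [hammingNorm, card_eq_sum_card_fiberwise (t := univ.erase 0) (f := u)
    fun i hi => mem_erase.2 ⟨(mem_filter.1 hi).2, mem_univ _⟩]
  refine sum_congr rfl fun j hj => ?_
  rw [← h j (ne_of_mem_erase hj)]
  congr 1
  ext i
  simp only [mem_filter, mem_univ, true_and, and_iff_right_iff_imp]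
  rintro rfl
  exact ne_of_mem_erase hj

theorem IsCCCode.add_two_mul_card_agree_le {q d : ℕ} [NeZero q] {w : ZMod q → ℕ}
    {C : Finset (ι → ZMod q)} (hC : IsCCCode q d w C) {u v : ι → ZMod q} (hu : u ∈ C)
    (hv : v ∈ C) (huv : u ≠ v) {A : Finset ι} (hA : ∀ i ∈ A, u i = v i ∧ u i ≠ 0) :
    d + 2 * #A ≤ 2 * ∑ j ∈ univ.erase 0, w j := by
  have := hammingDist_add_two_mul_card_le_hammingNorm_add hA
  rw [(hC.1 u hu).hammingNorm_eq, (hC.1 v hv).hammingNorm_eq] at this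
  have := hC.2 u hu v hv huv
  omega

end Composition

section W211

variable {ι : Type*} [Fintype ι] [DecidableEq ι] {C : Finset (ι → ZMod 4)}

theorem sum_erase_zero_w211 : ∑ j ∈ univ.erase (0 : ZMod 4), w211 j = 4 := by decide

theorem IsCCCode.disjoint_ones_of_two_eq (hC : IsCCCode 4 5 w211 C) {u v : ι → ZMod 4}
    (hu : u ∈ C) (hv : v ∈ C) (huv : u ≠ v) {x : ι} (hux : u x = 2) (hvx : v x = 2) :
    Disjoint ({i | u i = 1} : Finset ι) ({i | v i = 1} : Finset ι) := by
  refine disjoint_left.2 fun z hzu hzv => ?_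
  rw [mem_filter] at hzu hzv
  have hxz : x ≠ z := by
    rintro rfl
    exact absurd (hux.symm.trans hzu.2) (by decide)
  have := hC.add_two_mul_card_agree_le hu hv huv (A := {x, z}) (by
    simp only [mem_insert, mem_singleton]
    rintro i (rfl | rfl)
    · exact ⟨hux.trans hvx.symm, by rw [hux]; decide⟩
    · exact ⟨hzu.2.trans hzv.2.symm, by rw [hzu.2]; decide⟩)
  rw [sum_erase_zero_w211, card_pair hxz] at this
  omega

theorem IsCCCode.two_mul_card_filter_two_le (hC : IsCCCode 4 5 w211 C) (x : ι) :
    2 * #(C.filter (· x = 2)) ≤ Fintype.card ι - 1 := by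
  set T := C.filter (· x = 2)
  have hdisj : (T : Set (ι → ZMod 4)).PairwiseDisjoint fun u => ({i | u i = 1} : Finset ι) := by
    intro u hu v hv huv
    rw [coe_filter, Set.mem_ofPred_eq] at hu hv
    exact hC.disjoint_ones_of_two_eq hu.1 hv.1 huv hu.2 hv.2
  have hsub : T.biUnion (fun u => ({i | u i = 1} : Finset ι)) ⊆ univ.erase x := by
    intro i hi
    obtain ⟨u, hu, hui⟩ := mem_biUnion.1 hi
    refine mem_erase.2 ⟨fun hix => ?_, mem_univ i⟩
    rw [mem_filter, hix, (mem_filter.1 hu).2] at hui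
    exact absurd hui.2 (by decide)
  have := card_le_card hsub
  rw [card_biUnion hdisj, card_erase_of_mem (mem_univ x), card_univ,
    sum_congr rfl fun u hu => hC.1 u (mem_filter.1 hu).1 1 (by decide),
    sum_const, smul_eq_mul] at this
  simpa [w211, mul_comm] using this

theorem IsCCCode.card_le (hC : IsCCCode 4 5 w211 C) :
    #C ≤ Fintype.card ι * ((Fintype.card ι - 1) / 2) := by
  have hcount : ∑ x : ι, #(C.filter (· x = 2)) = #C := by
    have := sum_card_bipartiteAbove_eq_sum_card_bipartiteBelow (s := univ) (t := C)
      (r := fun x u => u x = 2)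
    simp only [bipartiteAbove, bipartiteBelow] at this
    rw [this, sum_congr rfl fun u hu => hC.1 u hu 2 (by decide)]
    simp [show w211 2 = 1 by decide]
  calc #C = ∑ x : ι, #(C.filter (· x = 2)) := hcount.symm
    _ ≤ ∑ _x : ι, (Fintype.card ι - 1) / 2 := sum_le_sum fun x _ =>
        (Nat.le_div_iff_mul_le two_pos).2 (mul_comm 2 _ ▸ hC.two_mul_card_filter_two_le x)
    _ = Fintype.card ι * ((Fintype.card ι - 1) / 2) := by simp

end W211

theorem maxCCC_dist_five_upper_bound_general (n : ℕ) :
    maxCCC 4 n 5 w211 ≤ n * ((n - 1) / 2) := by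
  refine csSup_le' ?_
  rintro s ⟨C, hC, rfl⟩
  simpa using hC.card_le

/-- `A_4(n,5,[2,1,1]) ≤ n·⌊(n−1)/2⌋` for all `n ≥ 4`. -/
theorem maxCCC_dist_five_upper_bound (n : ℕ) (hn : 4 ≤ n) :
    maxCCC 4 n 5 w211 ≤ n * ((n - 1) / 2) :=
  maxCCC_dist_five_upper_bound_general n
end

section
/- For all n ≥ 4, A_4(n,6,[2,1,1]) ≤ ⌊(n/2)·⌊(n−1)/3⌋⌋. -/
open Finset

/-- `A_4(n,6,[2,1,1]) ≤ ⌊(n/2)·⌊(n−1)/3⌋⌋` for all `n ≥ 4`. -/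
theorem maxCCC_dist_six_upper_bound (n : ℕ) (hn : 4 ≤ n) :
    maxCCC 4 n 6 w211 ≤ n * ((n - 1) / 3) / 2 := by

  apply csSup_le
  · exact ⟨0, ∅, ⟨fun u hu => absurd hu (notMem_empty u),
      fun u hu => absurd hu (notMem_empty u)⟩, card_empty⟩
  rintro s ⟨C, ⟨hcomp, hdist⟩, rfl⟩
  -- support of each codeword has size 4
  have hsupp : ∀ u ∈ C, (univ.filter fun y => u y ≠ 0).card = 4 := by
    intro u hu
    have h1 : (univ.filter fun x => u x = 1).card = 2 := by
      rw [hcomp u hu 1 (by decide)]; decide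
    have h2 : (univ.filter fun x => u x = 2).card = 1 := by
      rw [hcomp u hu 2 (by decide)]; decide
    have h3 : (univ.filter fun x => u x = 3).card = 1 := by
      rw [hcomp u hu 3 (by decide)]; decide
    have hiff : ∀ a : ZMod 4, a ≠ 0 ↔ (a = 1 ∨ a = 2 ∨ a = 3) := by decide
    have heq : (univ.filter fun y => u y ≠ 0)
        = (univ.filter fun y => u y = 1) ∪ ((univ.filter fun y => u y = 2)
          ∪ (univ.filter fun y => u y = 3)) := by
      ext z
      simp only [mem_filter, mem_univ, true_and, mem_union]
      exact hiff (u z)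
    rw [heq, card_union_of_disjoint, card_union_of_disjoint, h1, h2, h3]
    · simp only [disjoint_left, mem_filter, mem_univ, true_and]
      intro z hz hz'
      exact absurd (hz.symm.trans hz') (by decide)
    · simp only [disjoint_left, mem_filter, mem_univ, true_and, mem_union]
      rintro z hz (hz' | hz') <;> exact absurd (hz.symm.trans hz') (by decide)
  -- per-coordinate bound
  have hcoord : ∀ x : Fin n, (C.filter fun u => u x = 1).card ≤ (n - 1) / 3 := by
    intro x
    set Cx := C.filter fun u => u x = 1 with hCx
    set f : (Fin n → ZMod 4) → Finset (Fin n) :=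
      fun u => univ.filter fun y => u y ≠ 0 ∧ y ≠ x with hf
    have hfcard : ∀ u ∈ Cx, (f u).card = 3 := by
      intro u hu
      rw [mem_filter] at hu
      have : f u = (univ.filter fun y => u y ≠ 0).erase x := by
        ext z
        simp only [hf, mem_filter, mem_univ, true_and, mem_erase]
        tauto
      rw [this, card_erase_of_mem, hsupp u hu.1]
      simp only [mem_filter, mem_univ, true_and]
      rw [hu.2]; decide
    have hdisj : ∀ u ∈ Cx, ∀ v ∈ Cx, u ≠ v → Disjoint (f u) (f v) := by
      intro u hu v hv huv
      rw [mem_filter] at hu hv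
      rw [disjoint_left]
      intro y hyu hyv
      simp only [hf, mem_filter, mem_univ, true_and] at hyu hyv
      have hd := hdist u hu.1 v hv.1 huv
      -- show hammingDist u v ≤ 5
      have hsub : (univ.filter fun z => u z ≠ v z) ⊆
          ((univ.filter fun z => u z ≠ 0) ∪ (univ.filter fun z => v z ≠ 0)).erase x := by
        intro z hz
        simp only [mem_filter, mem_univ, true_and] at hz
        rw [mem_erase]
        constructor
        · rintro rfl; exact hz (hu.2.trans hv.2.symm)
        · simp only [mem_union, mem_filter, mem_univ, true_and]
          by_contra h
          push_neg at h
          exact hz (h.1.trans h.2.symm)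
      have hxy : ({x, y} : Finset (Fin n)) ⊆
          (univ.filter fun z => u z ≠ 0) ∩ (univ.filter fun z => v z ≠ 0) := by
        intro z hz
        simp only [mem_insert, mem_singleton] at hz
        simp only [mem_inter, mem_filter, mem_univ, true_and]
        rcases hz with rfl | rfl
        · constructor
          · rw [hu.2]; decide
          · rw [hv.2]; decide
        · exact ⟨hyu.1, hyv.1⟩
      have hxycard : ({x, y} : Finset (Fin n)).card = 2 := by
        rw [card_insert_of_notMem (by simp [Ne.symm hyu.2]), card_singleton]
      have hinter : 2 ≤ ((univ.filter fun z => u z ≠ 0) ∩ (univ.filter fun z => v z ≠ 0)).card := by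
        rw [← hxycard]; exact card_le_card hxy
      have hunion := card_union_add_card_inter (univ.filter fun z => u z ≠ 0)
        (univ.filter fun z => v z ≠ 0)
      rw [hsupp u hu.1, hsupp v hv.1] at hunion
      have hmem : x ∈ (univ.filter fun z => u z ≠ 0) ∪ (univ.filter fun z => v z ≠ 0) := by
        simp only [mem_union, mem_filter, mem_univ, true_and]
        left; rw [hu.2]; decide
      have h5 : hammingDist u v ≤ 5 := by
        calc hammingDist u v = (univ.filter fun z => u z ≠ v z).card := rfl
          _ ≤ (((univ.filter fun z => u z ≠ 0) ∪ (univ.filter fun z => v z ≠ 0)).erase x).card :=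
            card_le_card hsub
          _ = ((univ.filter fun z => u z ≠ 0) ∪ (univ.filter fun z => v z ≠ 0)).card - 1 :=
            card_erase_of_mem hmem
          _ ≤ 5 := by omega
      omega
    have hbi : (Cx.biUnion f).card = 3 * Cx.card := by
      rw [card_biUnion hdisj]
      rw [sum_congr rfl hfcard, sum_const, smul_eq_mul, mul_comm]
    have hbisub : Cx.biUnion f ⊆ univ.erase x := by
      intro z hz
      rw [mem_biUnion] at hz
      obtain ⟨u, _, hz⟩ := hz
      simp only [hf, mem_filter, mem_univ, true_and] at hz
      exact mem_erase.2 ⟨hz.2, mem_univ z⟩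
    have := card_le_card hbisub
    rw [hbi, card_erase_of_mem (mem_univ x), card_univ, Fintype.card_fin] at this
    omega
  -- double counting
  have key : 2 * C.card ≤ n * ((n - 1) / 3) := by
    have h1 : ∑ x : Fin n, (C.filter fun u => u x = 1).card = 2 * C.card := by
      calc ∑ x : Fin n, (C.filter fun u => u x = 1).card
          = ∑ u ∈ C, (univ.filter fun x => u x = 1).card := by
            simp only [card_filter]; exact Finset.sum_comm
        _ = ∑ _u ∈ C, 2 := sum_congr rfl (fun u hu => (hcomp u hu 1 (by decide)).trans (by decide))
        _ = 2 * C.card := by rw [sum_const, smul_eq_mul, mul_comm]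
    calc 2 * C.card = ∑ x : Fin n, (C.filter fun u => u x = 1).card := h1.symm
      _ ≤ ∑ _x : Fin n, (n - 1) / 3 := sum_le_sum (fun x _ => hcoord x)
      _ = n * ((n - 1) / 3) := by rw [sum_const, smul_eq_mul, card_univ, Fintype.card_fin]
  omega
end

section
/- For any positive integer t: if A_4(6t+1, 6, [2,1,1]) = ⌊((6t+1)/2)·⌊6t/3⌋⌋ = t(12t+2), then A_4(6t, 6, [2,1,1]) = ⌊(6t/2)·⌊(6t−1)/3⌋⌋ = 6t²−3t. (Shortening: in an optimal (6t+1)-code every coordinate carries exactly 4t nonzero entries; deleting one coordinate and all codewords nonzero there yields an optimal code of length 6t.) -/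
open Finset

lemma zmod4_ne_zero_iff : ∀ a : ZMod 4, a ≠ 0 ↔ a = 1 ∨ a = 2 ∨ a = 3 := by decide

lemma supp_card {n : ℕ} {u : Fin n → ZMod 4} (hu : HasComposition w211 u) :
    (univ.filter fun y => u y ≠ 0).card = 4 := by
  have h1 := hu 1 (by decide)
  have h2 := hu 2 (by decide)
  have h3 := hu 3 (by decide)
  have dis : ∀ (a b : ZMod 4), a ≠ b →
      Disjoint (univ.filter fun y => u y = a) (univ.filter fun y => u y = b) := by
    intro a b hab
    rw [Finset.disjoint_left]
    intro y hy hy'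
    simp only [mem_filter] at hy hy'
    exact hab (hy.2.symm.trans hy'.2)
  have e : (univ.filter fun y => u y ≠ 0)
      = (univ.filter fun y => u y = 1) ∪
        ((univ.filter fun y => u y = 2) ∪ (univ.filter fun y => u y = 3)) := by
    ext y
    simp only [mem_filter, mem_union, mem_univ, true_and]
    exact zmod4_ne_zero_iff (u y)
  rw [e, Finset.card_union_of_disjoint, Finset.card_union_of_disjoint (dis 2 3 (by decide)),
    h1, h2, h3]
  · decide
  · rw [Finset.disjoint_union_right]
    exact ⟨dis 1 2 (by decide), dis 1 3 (by decide)⟩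

lemma double_count {n : ℕ} (C : Finset (Fin n → ZMod 4)) (P : ZMod 4 → Prop) [DecidablePred P] :
    ∑ x : Fin n, (C.filter fun u => P (u x)).card
      = ∑ u ∈ C, (univ.filter fun x => P (u x)).card := by
  simp_rw [Finset.card_filter]
  exact Finset.sum_comm

lemma filter_succAbove_card {n : ℕ} (x : Fin (n + 1)) (q : Fin (n + 1) → Prop)
    [DecidablePred q] (hx : ¬ q x) :
    (univ.filter fun z : Fin n => q (x.succAbove z)).card = (univ.filter q).card := by
  apply Finset.card_bij (fun z _ => x.succAbove z)
  · intro z hz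
    simp only [mem_filter, mem_univ, true_and] at hz ⊢
    exact hz
  · intro a _ b _ hab
    exact x.succAbove_right_injective hab
  · intro y hy
    simp only [mem_filter, mem_univ, true_and] at hy
    obtain ⟨z, hz⟩ := Fin.exists_succAbove_eq (show y ≠ x by rintro rfl; exact hx hy)
    exact ⟨z, by simp [hz, hy]⟩

lemma supp_disjoint {n : ℕ} {u v : Fin n → ZMod 4} {x : Fin n}
    (hu : HasComposition w211 u) (hv : HasComposition w211 v)
    (hd : 6 ≤ hammingDist u v) (hux : u x = 1) (hvx : v x = 1) :
    Disjoint ((univ.filter fun y => u y ≠ 0).erase x)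
      ((univ.filter fun y => v y ≠ 0).erase x) := by
  rw [Finset.disjoint_left]
  intro y hyu hyv
  simp only [mem_erase, mem_filter, mem_univ, true_and] at hyu hyv
  set A := univ.filter fun y => u y ≠ 0 with hA
  set B := univ.filter fun y => v y ≠ 0 with hB
  have hAc : A.card = 4 := supp_card hu
  have hBc : B.card = 4 := supp_card hv
  have hxy : ({x, y} : Finset (Fin n)) ⊆ A ∩ B := by
    intro z hz
    simp only [mem_insert, mem_singleton] at hz
    simp only [mem_inter, hA, hB, mem_filter, mem_univ, true_and]
    rcases hz with rfl | rfl
    · exact ⟨by rw [hux]; decide, by rw [hvx]; decide⟩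
    · exact ⟨hyu.2, hyv.2⟩
  have h2 : 2 ≤ (A ∩ B).card := by
    have := Finset.card_le_card hxy
    rwa [Finset.card_pair (Ne.symm hyu.1)] at this
  have hUI : (A ∪ B).card + (A ∩ B).card = A.card + B.card :=
    Finset.card_union_add_card_inter A B
  have hxAB : x ∈ A ∪ B := by
    simp only [mem_union, hA, mem_filter, mem_univ, true_and]
    left; rw [hux]; decide
  have hsub : (univ.filter fun i => u i ≠ v i) ⊆ (A ∪ B).erase x := by
    intro z hz
    simp only [mem_filter, mem_univ, true_and] at hz
    simp only [mem_erase, mem_union, hA, hB, mem_filter, mem_univ, true_and]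
    constructor
    · rintro rfl; rw [hux, hvx] at hz; exact hz rfl
    · by_contra hc
      push_neg at hc
      rw [hc.1, hc.2] at hz
      exact hz rfl
  have hdc : hammingDist u v = (univ.filter fun i => u i ≠ v i).card := rfl
  have hle : hammingDist u v ≤ ((A ∪ B).erase x).card := by
    rw [hdc]; exact Finset.card_le_card hsub
  rw [Finset.card_erase_of_mem hxAB] at hle
  omega
lemma arith1 (t c : ℕ) (ht : 1 ≤ t) (h : 2 * c ≤ 6 * t * (2 * t - 1)) :
    c ≤ 6 * t ^ 2 - 3 * t := by
  have h1 : (1:ℕ) ≤ 2 * t := by omega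
  have h2 : 3 * t ≤ 6 * t ^ 2 := by nlinarith
  zify [h1, h2] at h ⊢
  nlinarith

lemma arith2 (t c : ℕ) (h : (6 * t + 1) * (4 * t + 1) ≤ 4 * c) (hc : c = 6 * t ^ 2 + t) :
    False := by
  subst hc; nlinarith

lemma arith3 (t a b : ℕ) (ht : 1 ≤ t) (hsplit : a + b = 6 * t ^ 2 + t) (hb : b ≤ 4 * t) :
    6 * t ^ 2 - 3 * t ≤ a := by
  have h2 : 3 * t ≤ 6 * t ^ 2 := by nlinarith
  omega
lemma upper_bound (t : ℕ) (ht : 1 ≤ t) (C : Finset (Fin (6 * t) → ZMod 4))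
    (hC : IsCCCode 4 6 w211 C) : C.card ≤ 6 * t ^ 2 - 3 * t := by
  obtain ⟨hcomp, hdist⟩ := hC
  have hcoord : ∀ x : Fin (6 * t), (C.filter fun u => u x = 1).card ≤ 2 * t - 1 := by
    intro x
    set S := C.filter fun u => u x = 1 with hS
    set f : (Fin (6 * t) → ZMod 4) → Finset (Fin (6 * t)) :=
      fun u => (univ.filter fun y => u y ≠ 0).erase x with hf
    have hmemS : ∀ u ∈ S, u ∈ C ∧ u x = 1 := by
      intro u hu; simpa [hS, mem_filter] using hu
    have hdisj : ∀ u ∈ S, ∀ v ∈ S, u ≠ v → Disjoint (f u) (f v) := by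
      intro u hu v hv huv
      obtain ⟨huC, hux⟩ := hmemS u hu
      obtain ⟨hvC, hvx⟩ := hmemS v hv
      exact supp_disjoint (hcomp u huC) (hcomp v hvC) (hdist u huC v hvC huv) hux hvx
    have hcard3 : ∀ u ∈ S, (f u).card = 3 := by
      intro u hu
      obtain ⟨huC, hux⟩ := hmemS u hu
      rw [hf, Finset.card_erase_of_mem, supp_card (hcomp u huC)]
      simp only [mem_filter, mem_univ, true_and]
      rw [hux]; decide
    have hbu : (S.biUnion f).card = ∑ u ∈ S, (f u).card := Finset.card_biUnion hdisj
    have hsub : S.biUnion f ⊆ univ.erase x := by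
      intro y hy
      rw [Finset.mem_biUnion] at hy
      obtain ⟨u, _, hyu⟩ := hy
      simp only [hf, mem_erase, mem_filter, mem_univ, true_and] at hyu ⊢
      exact ⟨hyu.1, trivial⟩
    have hbd : (S.biUnion f).card ≤ 6 * t - 1 := by
      have := Finset.card_le_card hsub
      rwa [Finset.card_erase_of_mem (mem_univ x), card_univ, Fintype.card_fin] at this
    have hsum3 : ∑ u ∈ S, (f u).card = 3 * S.card := by
      rw [Finset.sum_congr rfl hcard3, Finset.sum_const, smul_eq_mul, mul_comm]
    omega
  have hsum : ∑ x : Fin (6 * t), (C.filter fun u => u x = 1).card = 2 * C.card := by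
    rw [double_count C (fun a => a = 1)]
    have : ∀ u ∈ C, (univ.filter fun x => u x = 1).card = 2 := by
      intro u hu; exact hcomp u hu 1 (by decide)
    rw [Finset.sum_congr rfl this, Finset.sum_const, smul_eq_mul, mul_comm]
  have hle : ∑ x : Fin (6 * t), (C.filter fun u => u x = 1).card
      ≤ ∑ _x : Fin (6 * t), (2 * t - 1) := Finset.sum_le_sum fun x _ => hcoord x
  rw [hsum, Finset.sum_const, card_univ, Fintype.card_fin, smul_eq_mul] at hle
  exact arith1 t C.card ht hle

lemma empty_code (n : ℕ) : IsCCCode 4 6 w211 (∅ : Finset (Fin n → ZMod 4)) :=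
  ⟨fun u hu => absurd hu (Finset.notMem_empty u),
   fun u hu => absurd hu (Finset.notMem_empty u)⟩

lemma bdd (n : ℕ) :
    BddAbove {s | ∃ C : Finset (Fin n → ZMod 4), IsCCCode 4 6 w211 C ∧ C.card = s} :=
  ⟨Fintype.card (Fin n → ZMod 4), by rintro s ⟨C, _, rfl⟩; exact Finset.card_le_univ C⟩


/-- Shortening: if `A_4(6t+1,6,[2,1,1])` meets its upper bound
`⌊((6t+1)/2)·⌊6t/3⌋⌋`, then `A_4(6t,6,[2,1,1]) = 6t²−3t` meets its upper bound. -/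
theorem maxCCC_six_t_of_six_t_add_one (t : ℕ) (ht : 1 ≤ t)
    (h : maxCCC 4 (6 * t + 1) 6 w211 = (6 * t + 1) * ((6 * t) / 3) / 2) :
    maxCCC 4 (6 * t) 6 w211 = 6 * t ^ 2 - 3 * t := by
  have hne : ∀ n : ℕ, Set.Nonempty
      {s | ∃ C : Finset (Fin n → ZMod 4), IsCCCode 4 6 w211 C ∧ C.card = s} :=
    fun n => ⟨0, ∅, empty_code n, Finset.card_empty⟩
  -- upper bound
  have hub : maxCCC 4 (6 * t) 6 w211 ≤ 6 * t ^ 2 - 3 * t := by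
    apply csSup_le (hne (6 * t))
    rintro s ⟨C, hC, rfl⟩
    exact upper_bound t ht C hC
  -- the optimal long code
  have hval : (6 * t + 1) * ((6 * t) / 3) / 2 = 6 * t ^ 2 + t := by
    have h1 : 6 * t / 3 = 2 * t := by omega
    have h2 : (6 * t + 1) * (2 * t) = (6 * t ^ 2 + t) * 2 := by ring
    rw [h1, h2, Nat.mul_div_cancel _ (by norm_num)]
  have hmem := Nat.sSup_mem (hne (6 * t + 1)) (bdd (6 * t + 1))
  obtain ⟨C, hC, hCcard⟩ := hmem
  rw [show sSup {s | ∃ C : Finset (Fin (6 * t + 1) → ZMod 4),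
      IsCCCode 4 6 w211 C ∧ C.card = s} = maxCCC 4 (6 * t + 1) 6 w211 from rfl,
    h, hval] at hCcard
  obtain ⟨hcomp, hdist⟩ := hC
  -- counting: some coordinate has at most 4t nonzero entries
  have hsum4 : ∑ x : Fin (6 * t + 1), (C.filter fun u => u x ≠ 0).card = 4 * C.card := by
    rw [double_count C (fun a => a ≠ 0)]
    have : ∀ u ∈ C, (univ.filter fun x => u x ≠ 0).card = 4 :=
      fun u hu => supp_card (hcomp u hu)
    rw [Finset.sum_congr rfl this, Finset.sum_const, smul_eq_mul, mul_comm]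
  have hex : ∃ x : Fin (6 * t + 1), (C.filter fun u => u x ≠ 0).card ≤ 4 * t := by
    by_contra hc
    push_neg at hc
    have hge : ∑ _x : Fin (6 * t + 1), (4 * t + 1)
        ≤ ∑ x : Fin (6 * t + 1), (C.filter fun u => u x ≠ 0).card :=
      Finset.sum_le_sum fun x _ => hc x
    rw [hsum4, hCcard, Finset.sum_const, card_univ, Fintype.card_fin, smul_eq_mul] at hge
    nlinarith [hge]
  obtain ⟨x, hx⟩ := hex
  set D := C.filter fun u => u x = 0 with hD
  have hDcard : 6 * t ^ 2 - 3 * t ≤ D.card := by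
    have hsplit : (C.filter fun u => u x = 0).card + (C.filter fun u => ¬ u x = 0).card
        = C.card := Finset.card_filter_add_card_filter_not _
    rw [hCcard] at hsplit
    exact arith3 t D.card _ ht hsplit hx
  have hmemD : ∀ u ∈ D, u ∈ C ∧ u x = 0 := by
    intro u hu; simpa [hD, mem_filter] using hu
  set r : (Fin (6 * t + 1) → ZMod 4) → (Fin (6 * t) → ZMod 4) :=
    fun u => u ∘ x.succAbove with hr
  have hinj : Set.InjOn r D := by
    intro u hu v hv huv
    obtain ⟨_, hux⟩ := hmemD u hu
    obtain ⟨_, hvx⟩ := hmemD v hv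
    funext y
    by_cases hy : y = x
    · rw [hy, hux, hvx]
    · obtain ⟨z, hz⟩ := Fin.exists_succAbove_eq hy
      have := congrFun huv z
      simpa [hr, hz] using this
  have hC'code : IsCCCode 4 6 w211 (D.image r) := by
    constructor
    · intro u' hu'
      obtain ⟨u, hu, rfl⟩ := Finset.mem_image.mp hu'
      obtain ⟨huC, hux⟩ := hmemD u hu
      intro j hj
      have := filter_succAbove_card x (fun y => u y = j)
        (by show ¬ u x = j; rw [hux]; exact fun e => hj e.symm)
      rw [show (univ.filter fun z : Fin (6 * t) => (r u) z = j)
          = univ.filter fun z : Fin (6 * t) => u (x.succAbove z) = j from rfl, this]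
      exact hcomp u huC j hj
    · intro u' hu' v' hv' hne'
      obtain ⟨u, hu, rfl⟩ := Finset.mem_image.mp hu'
      obtain ⟨v, hv, rfl⟩ := Finset.mem_image.mp hv'
      obtain ⟨huC, hux⟩ := hmemD u hu
      obtain ⟨hvC, hvx⟩ := hmemD v hv
      have huv : u ≠ v := fun e => hne' (by rw [e])
      have hdd : hammingDist (r u) (r v) = hammingDist u v := by
        show (univ.filter fun z : Fin (6 * t) => u (x.succAbove z) ≠ v (x.succAbove z)).card
          = (univ.filter fun y => u y ≠ v y).card
        exact filter_succAbove_card x (fun y => u y ≠ v y)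
          (by show ¬ u x ≠ v x; rw [hux, hvx]; exact fun e => e rfl)
      rw [hdd]
      exact hdist u huC v hvC huv
  have hlb : 6 * t ^ 2 - 3 * t ≤ maxCCC 4 (6 * t) 6 w211 := by
    have hmem' : (D.image r).card ∈
        {s | ∃ C : Finset (Fin (6 * t) → ZMod 4), IsCCCode 4 6 w211 C ∧ C.card = s} :=
      ⟨D.image r, hC'code, rfl⟩
    have := le_csSup (bdd (6 * t)) hmem'
    rw [Finset.card_image_of_injOn hinj] at this
    exact le_trans hDcard this
  exact le_antisymm hub hlb
end
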